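/- Let A = ⊗_p σ_p with σ_p in the Sigma basis, with completion Ā = ⊗_p σ̄_p. Then Ā is orthogonal, ĀᵀĀ = I, and Ā agrees with A on the column space of AᵀA: Ā (AᵀA) = A (AᵀA) = A. In particular Ā is a unitary completion of A in the sense that Ā|w⟩ = A|w⟩ for all |w⟩ in the range of AᵀA. -/
import Mathlib
open Matrix

noncomputable section
open scoped Classical

def σp : Matrix (Fin 2) (Fin 2) ℝ := !![0, 1; 0, 0]
def σm : Matrix (Fin 2) (Fin 2) ℝ := !![0, 0; 1, 0]
def σpm : Matrix (Fin 2) (Fin 2) ℝ := !![1, 0; 0, 0]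
def σmp : Matrix (Fin 2) (Fin 2) ℝ := !![0, 0; 0, 1]
def σx : Matrix (Fin 2) (Fin 2) ℝ := !![0, 1; 1, 0]

def SigmaBasis : Set (Matrix (Fin 2) (Fin 2) ℝ) := {1, σp, σm, σpm, σmp}

def bar (σ : Matrix (Fin 2) (Fin 2) ℝ) : Matrix (Fin 2) (Fin 2) ℝ :=
  if σ = σp ∨ σ = σm then σx else 1

def kronN : (n : ℕ) → (Fin n → Matrix (Fin 2) (Fin 2) ℝ) → Matrix (Fin (2 ^ n)) (Fin (2 ^ n)) ℝ
  | 0, _ => 1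
  | n + 1, σ =>
    Matrix.reindex (finProdFinEquiv.trans (finCongr (by ring)))
      (finProdFinEquiv.trans (finCongr (by ring)))
      (Matrix.kroneckerMap (· * ·) (σ 0) (kronN n (fun i => σ i.succ)))

lemma kronN_mul (n : ℕ) (A B : Fin n → Matrix (Fin 2) (Fin 2) ℝ) :
    kronN n A * kronN n B = kronN n (fun i => A i * B i) := by
  induction n with
  | zero => simp [kronN]
  | succ n ih =>
    simp only [kronN, reindex_apply, Matrix.submatrix_mul_equiv]
    rw [← Matrix.mul_kronecker_mul, ih]

lemma kronN_transpose (n : ℕ) (A : Fin n → Matrix (Fin 2) (Fin 2) ℝ) :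
    (kronN n A)ᵀ = kronN n (fun i => (A i)ᵀ) := by
  induction n with
  | zero => simp [kronN]
  | succ n ih =>
    simp only [kronN, reindex_apply, Matrix.transpose_submatrix]
    rw [← ih, Matrix.kroneckerMap_transpose]

lemma kronN_one (n : ℕ) : kronN n (fun _ => (1 : Matrix (Fin 2) (Fin 2) ℝ)) = 1 := by
  induction n with
  | zero => rfl
  | succ n ih =>
    simp only [kronN, ih, Matrix.one_kronecker_one, reindex_apply, Matrix.submatrix_one_equiv]

lemma kronN_congr (n : ℕ) (A B : Fin n → Matrix (Fin 2) (Fin 2) ℝ) (h : ∀ i, A i = B i) :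
    kronN n A = kronN n B := by
  exact congrArg _ (funext h)

theorem completion_agrees_on_range (n : ℕ) (σ : Fin n → Matrix (Fin 2) (Fin 2) ℝ)
    (hσ : ∀ p, σ p ∈ SigmaBasis) :
    letI A := kronN n σ
    letI Abar := kronN n (fun p => bar (σ p))
    Abarᵀ * Abar = 1 ∧
    Abar * (Aᵀ * A) = A ∧
    A * (Aᵀ * A) = A ∧
    ∀ v : Fin (2 ^ n) → ℝ,
      Abar.mulVec ((Aᵀ * A).mulVec v) = A.mulVec ((Aᵀ * A).mulVec v) := by
  have entry_ne : ∀ (M N : Matrix (Fin 2) (Fin 2) ℝ) (i j : Fin 2), M i j ≠ N i j → M ≠ N := by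
    intro M N i j hij h; exact hij (by rw [h])
  have bar_vals : ∀ p, (σ p = 1 → bar (σ p) = 1) ∧ (σ p = σp → bar (σ p) = σx) ∧
      (σ p = σm → bar (σ p) = σx) ∧ (σ p = σpm → bar (σ p) = 1) ∧ (σ p = σmp → bar (σ p) = 1) := by
    intro p
    refine ⟨fun h => ?_, fun h => ?_, fun h => ?_, fun h => ?_, fun h => ?_⟩ <;> rw [h, bar]
    · rw [if_neg]; rintro (h1 | h1)
      · exact entry_ne _ _ 0 0 (by norm_num [σp, Matrix.one_apply]) h1
      · exact entry_ne _ _ 0 0 (by norm_num [σm, Matrix.one_apply]) h1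
    · rw [if_pos (Or.inl rfl)]
    · rw [if_pos (Or.inr rfl)]
    · rw [if_neg]; rintro (h1 | h1)
      · exact entry_ne _ _ 0 0 (by norm_num [σp, σpm]) h1
      · exact entry_ne _ _ 0 0 (by norm_num [σm, σpm]) h1
    · rw [if_neg]; rintro (h1 | h1)
      · exact entry_ne _ _ 1 1 (by norm_num [σp, σmp]) h1
      · exact entry_ne _ _ 1 1 (by norm_num [σm, σmp]) h1
  have fact : ∀ p, (bar (σ p))ᵀ * bar (σ p) = 1 ∧
      bar (σ p) * ((σ p)ᵀ * σ p) = σ p ∧ σ p * ((σ p)ᵀ * σ p) = σ p := by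
    intro p
    rcases hσ p with h | h | h | h | h
    · rw [(bar_vals p).1 h, h]
      refine ⟨by simp, by simp, by simp⟩
    · rw [(bar_vals p).2.1 h, h]
      refine ⟨?_, ?_, ?_⟩ <;> ext i j <;> fin_cases i <;> fin_cases j <;>
        simp [σp, σx, Matrix.mul_apply, Fin.sum_univ_two, Matrix.vecHead, Matrix.vecTail, Matrix.transpose_apply, Matrix.one_apply]
    · rw [(bar_vals p).2.2.1 h, h]
      refine ⟨?_, ?_, ?_⟩ <;> ext i j <;> fin_cases i <;> fin_cases j <;>
        simp [σm, σx, Matrix.mul_apply, Fin.sum_univ_two, Matrix.vecHead, Matrix.vecTail, Matrix.transpose_apply, Matrix.one_apply]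
    · rw [(bar_vals p).2.2.2.1 h, h]
      refine ⟨by simp, ?_, ?_⟩ <;> ext i j <;> fin_cases i <;> fin_cases j <;>
        simp [σpm, Matrix.mul_apply, Fin.sum_univ_two, Matrix.vecHead, Matrix.vecTail, Matrix.transpose_apply]
    · rw [(bar_vals p).2.2.2.2 (by simpa using h), show σ p = σmp by simpa using h]
      refine ⟨by simp, ?_, ?_⟩ <;> ext i j <;> fin_cases i <;> fin_cases j <;>
        simp [σmp, Matrix.mul_apply, Fin.sum_univ_two, Matrix.vecHead, Matrix.vecTail, Matrix.transpose_apply]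
  have h1 : (kronN n (fun p => bar (σ p)))ᵀ * kronN n (fun p => bar (σ p)) = 1 := by
    rw [kronN_transpose, kronN_mul,
      kronN_congr n _ (fun _ => 1) (fun i => (fact i).1), kronN_one]
  have h2 : kronN n (fun p => bar (σ p)) * ((kronN n σ)ᵀ * kronN n σ) = kronN n σ := by
    rw [kronN_transpose, kronN_mul, kronN_mul]
    exact kronN_congr n _ _ (fun i => by exact (fact i).2.1)
  have h3 : kronN n σ * ((kronN n σ)ᵀ * kronN n σ) = kronN n σ := by
    rw [kronN_transpose, kronN_mul, kronN_mul]
    exact kronN_congr n _ _ (fun i => by exact (fact i).2.2)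
  refine ⟨h1, h2, h3, fun v => ?_⟩
  rw [Matrix.mulVec_mulVec, Matrix.mulVec_mulVec, h2, h3]
end
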